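/- arXiv:2505.11291 — 2 statements merged into one kernel-verified Lean document; each statement's English description precedes it below -/
import Mathlib

section
/- Let r ≥ 2 and 1 ≤ s ≤ r-1 be integers, I_{r,s} and Π_{r,s} as follows: I_{r,s} is the set of (i,k) ∈ {1,...,r} × ℤ with (1 ≤ i ≤ r-s and k ≥ 0) or (r-s+1 ≤ i ≤ r and k ≥ r-s-i+1), and Π_{r,s}(i,k) = (i-1)s + rk. Then the restriction of Π_{r,s} to I_{r,s} is injective if and only if gcd(r, s) = 1. -/
/-- The index set `I_{r,s}` of the `W`-constraint modes. -/
def Iset (r s : ℤ) : Set (ℤ × ℤ) :=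
  {p | (1 ≤ p.1 ∧ p.1 ≤ r - s ∧ 0 ≤ p.2) ∨
       (r - s + 1 ≤ p.1 ∧ p.1 ≤ r ∧ r - s - p.1 + 1 ≤ p.2)}

/-- The map `Π_{r,s}(i,k) = (i-1)s + rk`. -/
def Pimap (r s : ℤ) (p : ℤ × ℤ) : ℤ := (p.1 - 1) * s + r * p.2

theorem stmt_14 (r s : ℤ) (hr : 2 ≤ r) (hs1 : 1 ≤ s) (hs2 : s ≤ r - 1) :
    Set.InjOn (Pimap r s) (Iset r s) ↔ Int.gcd r s = 1 := by
  constructor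
  · -- injective → gcd = 1
    intro hinj
    by_contra hg
    set g : ℤ := (Int.gcd r s : ℤ) with hgdef
    have hgr : g ∣ r := Int.gcd_dvd_left r s
    have hgs : g ∣ s := Int.gcd_dvd_right r s
    have hg2 : 2 ≤ g := by
      have h1 : 1 ≤ Int.gcd r s := Nat.one_le_iff_ne_zero.2 (by
        intro h
        have := Int.gcd_eq_zero_iff.mp h
        omega)
      have : 2 ≤ Int.gcd r s := by omega
      rw [hgdef]; exact_mod_cast this
    obtain ⟨a, ha⟩ := hgr
    obtain ⟨b, hb⟩ := hgs
    have ha1 : 1 ≤ a := by nlinarith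
    have hb1 : 1 ≤ b := by nlinarith
    have har : a < r := by nlinarith
    have hbs : b ≤ s := by nlinarith
    -- two colliding points
    have hp1 : ((1 : ℤ), r) ∈ Iset r s := by
      left; refine ⟨le_refl _, by omega, by omega⟩
    have hp2 : ((1 + a : ℤ), r - b) ∈ Iset r s := by
      by_cases hc : 1 + a ≤ r - s
      · left; exact ⟨by omega, hc, by omega⟩
      · right; exact ⟨by omega, by omega, by omega⟩
    have heq : Pimap r s (1, r) = Pimap r s (1 + a, r - b) := by
      simp only [Pimap]
      have : a * s = r * b := by
        calc a * s = a * (g * b) := by rw [hb]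
        _ = (g * a) * b := by ring
        _ = r * b := by rw [← ha]
      ring_nf
      nlinarith [this]
    have := hinj hp1 hp2 heq
    have : (1 : ℤ) = 1 + a := congrArg Prod.fst this
    omega
  · -- gcd = 1 → injective
    intro hg p hp q hq heq
    have hcop : IsCoprime r s := Int.isCoprime_iff_gcd_eq_one.mpr hg
    have hkey : (p.1 - q.1) * s = r * (q.2 - p.2) := by
      simp only [Pimap] at heq; ring_nf; nlinarith [heq]
    have hdvd : r ∣ (p.1 - q.1) := by
      have : r ∣ (p.1 - q.1) * s := ⟨q.2 - p.2, hkey⟩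
      exact hcop.dvd_of_dvd_mul_right this
    have hpb : 1 ≤ p.1 ∧ p.1 ≤ r := by
      rcases hp with ⟨h1, h2, _⟩ | ⟨h1, h2, _⟩ <;> omega
    have hqb : 1 ≤ q.1 ∧ q.1 ≤ r := by
      rcases hq with ⟨h1, h2, _⟩ | ⟨h1, h2, _⟩ <;> omega
    have habs : |p.1 - q.1| < r := by
      rw [abs_lt]; omega
    have h1 : p.1 - q.1 = 0 := Int.eq_zero_of_abs_lt_dvd hdvd habs
    have h2 : r * (q.2 - p.2) = 0 := by rw [← hkey, h1, zero_mul]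
    have h3 : q.2 - p.2 = 0 := by
      rcases mul_eq_zero.mp h2 with h | h
      · omega
      · exact h
    exact Prod.ext (by omega) (by omega)
end

section
/- For integers k ≥ 1 and n ≥ 0, the number of permutations τ of the set {1, 2, ..., k+n} such that every cycle of τ contains at least one element of {1, ..., k} equals k! · ∏_{i=0}^{n-1} (k+i) = k! · (k+n-1)!/(k-1)!. -/
open Equiv

lemma perm_pow_apply_succ {γ : Type*} (f : Perm γ) (n : ℕ) (x : γ) :
    (f ^ (n + 1)) x = f ((f ^ n) x) := by rw [pow_succ', Perm.mul_apply]

lemma perm_pow_apply_succ' {γ : Type*} (f : Perm γ) (n : ℕ) (x : γ) :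
    (f ^ (n + 1)) x = (f ^ n) (f x) := by rw [pow_succ, Perm.mul_apply]

section aux

variable {α : Type*} [DecidableEq α] (e : Perm (Option α))

lemma aux_L1 (m : ℕ) (x : α) :
    ∃ M : ℕ, (e ^ M) (some x) = some ((removeNone e ^ m) x) := by
  induction m with
  | zero => exact ⟨0, rfl⟩
  | succ m ih =>
    obtain ⟨M, hM⟩ := ih
    set z := (removeNone e ^ m) x with hz
    cases h : e (some z) with
    | some w =>
      have hw : removeNone e z = w := by
        have := removeNone_some e (x := z) ⟨w, h⟩
        rw [h] at this; exact Option.some_injective _ this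
      refine ⟨M + 1, ?_⟩
      rw [perm_pow_apply_succ, perm_pow_apply_succ, hM, h, hw]
    | none =>
      have hw : some (removeNone e z) = e none := removeNone_none e h
      refine ⟨M + 2, ?_⟩
      have h2 : (M : ℕ) + 2 = (M + 1) + 1 := rfl
      rw [h2, perm_pow_apply_succ, perm_pow_apply_succ, perm_pow_apply_succ, hM, h, ← hw]

lemma aux_L2 (he : e none ≠ none) (M : ℕ) :
    ∀ x y : α, (e ^ M) (some x) = some y → ∃ m : ℕ, (removeNone e ^ m) x = y := by
  induction M using Nat.strong_induction_on with
  | _ M ih =>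
    intro x y hxy
    match M, hxy with
    | 0, hxy => exact ⟨0, Option.some_injective _ hxy⟩
    | (M + 1), hxy =>
      rw [perm_pow_apply_succ] at hxy
      cases hz : (e ^ M) (some x) with
      | some z =>
        rw [hz] at hxy
        obtain ⟨m, hm⟩ := ih M (Nat.lt_succ_self M) x z hz
        have : removeNone e z = y := by
          have := removeNone_some e (x := z) ⟨y, hxy⟩
          rw [hxy] at this; exact Option.some_injective _ this
        exact ⟨m + 1, by rw [perm_pow_apply_succ, hm, this]⟩
      | none =>
        match M, hz with
        | 0, hz => exact absurd hz (by simp)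
        | (M + 1), hz =>
          have h2 : e none = some y := by rw [hz] at hxy; exact hxy
          rw [perm_pow_apply_succ] at hz
          cases hw : (e ^ M) (some x) with
          | none =>
            rw [hw] at hz; exact absurd hz he
          | some w =>
            rw [hw] at hz
            obtain ⟨m, hm⟩ := ih M (by omega) x w hw
            have h1 : some (removeNone e w) = e none := removeNone_none e hz
            have : removeNone e w = y := by
              rw [h2] at h1; exact Option.some_injective _ h1
            exact ⟨m + 1, by rw [perm_pow_apply_succ, hm, this]⟩

lemma aux_main (q : α → Prop) :
    (∀ y : Option α, ∃ m : ℕ, ∃ x, (e ^ m) y = some x ∧ q x) ↔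
      (e none ≠ none ∧ ∀ x : α, ∃ m : ℕ, q ((removeNone e ^ m) x)) := by
  constructor
  · intro h
    have he : e none ≠ none := by
      intro h0
      obtain ⟨m, x, hx, -⟩ := h none
      have : ∀ m : ℕ, (e ^ m) none = none := by
        intro m; induction m with
        | zero => rfl
        | succ m ih => rw [perm_pow_apply_succ, ih, h0]
      rw [this m] at hx; exact nomatch hx
    refine ⟨he, fun x => ?_⟩
    obtain ⟨m, y, hy, hqy⟩ := h (some x)
    obtain ⟨m', hm'⟩ := aux_L2 e he m x y hy
    exact ⟨m', by rw [hm']; exact hqy⟩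
  · rintro ⟨he, h⟩
    have hsome : ∀ x : α, ∃ m : ℕ, ∃ z, (e ^ m) (some x) = some z ∧ q z := by
      intro x
      obtain ⟨m, hm⟩ := h x
      obtain ⟨M, hM⟩ := aux_L1 e m x
      exact ⟨M, _, hM, hm⟩
    intro y
    cases y with
    | some x => exact hsome x
    | none =>
      cases hb : e none with
      | none => exact absurd hb he
      | some b =>
        obtain ⟨m, z, hz, hqz⟩ := hsome b
        refine ⟨m + 1, z, ?_, hqz⟩
        rw [perm_pow_apply_succ', hb, hz]

end aux

section count

variable (k : ℕ)

/-- The property in question. -/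
def GoodPerm {N : ℕ} (τ : Perm (Fin N)) : Prop :=
  ∀ x : Fin N, ∃ m : ℕ, ((τ ^ m) x : ℕ) < k

lemma permCongr_pow {α β : Type*} (f : α ≃ β) (τ : Perm α) (m : ℕ) :
    (f.permCongr τ) ^ m = f.permCongr (τ ^ m) := by
  induction m with
  | zero => ext y; simp
  | succ m ih => ext y; simp [pow_succ, ih, Perm.mul_apply]

lemma good_iff (N : ℕ) (hN : k ≤ N) (τ : Perm (Fin (N + 1))) :
    GoodPerm k τ ↔
      ((finSuccEquivLast.permCongr τ) none ≠ none ∧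
        GoodPerm k (removeNone (finSuccEquivLast.permCongr τ))) := by
  set e : Perm (Option (Fin N)) := finSuccEquivLast.permCongr τ with he
  have key : ∀ z : Fin (N + 1),
      ((z : ℕ) < k ↔ ∃ x, finSuccEquivLast z = some x ∧ (x : ℕ) < k) := by
    intro z
    induction z using Fin.lastCases with
    | last =>
      simp only [finSuccEquivLast_last]
      constructor
      · intro hlt
        simp only [Fin.val_last] at hlt
        omega
      · rintro ⟨x, hx, -⟩; exact nomatch hx
    | cast i =>
      simp only [finSuccEquivLast_castSucc]
      constructor
      · intro hlt; exact ⟨i, rfl, by simpa using hlt⟩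
      · rintro ⟨x, hx, hlt⟩
        obtain rfl : i = x := Option.some_injective _ hx
        simpa using hlt
  have hiter : ∀ (m : ℕ) (y : Option (Fin N)),
      (e ^ m) y = finSuccEquivLast ((τ ^ m) (finSuccEquivLast.symm y)) := by
    intro m y
    rw [he, permCongr_pow]
    rfl
  have main := aux_main e (fun x : Fin N => (x : ℕ) < k)
  unfold GoodPerm
  rw [← main]
  constructor
  · intro h y
    obtain ⟨m, hm⟩ := h (finSuccEquivLast.symm y)
    rw [key] at hm
    obtain ⟨x, hx, hlt⟩ := hm
    exact ⟨m, x, by rw [hiter]; exact hx, hlt⟩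
  · intro h x
    obtain ⟨m, z, hz, hlt⟩ := h (finSuccEquivLast x)
    refine ⟨m, ?_⟩
    rw [key]
    rw [hiter, Equiv.symm_apply_apply] at hz
    exact ⟨z, hz, hlt⟩

/-- The subtype equivalence giving the induction step. -/
noncomputable def stepEquiv (n : ℕ) :
    {τ : Perm (Fin (k + (n + 1))) // GoodPerm k τ} ≃
      ({o : Option (Fin (k + n)) // o ≠ none} × {σ : Perm (Fin (k + n)) // GoodPerm k σ}) :=
  calc {τ : Perm (Fin (k + n + 1)) // GoodPerm k τ}
      ≃ {e : Perm (Option (Fin (k + n))) //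
          e none ≠ none ∧ GoodPerm k (removeNone e)} :=
        ((finSuccEquivLast.permCongr).subtypeEquiv
          (fun τ => good_iff k (k + n) (Nat.le_add_right k n) τ))
    _ ≃ {p : Option (Fin (k + n)) × Perm (Fin (k + n)) //
          p.1 ≠ none ∧ GoodPerm k p.2} :=
        (Equiv.Perm.decomposeOption.subtypeEquiv (fun e => Iff.rfl))
    _ ≃ _ := Equiv.subtypeProdEquivProd
      (p := fun o : Option (Fin (k + n)) => o ≠ none) (q := fun σ => GoodPerm k σ)

lemma card_option_ne_none (β : Type*) [Fintype β] [DecidableEq β] :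
    Nat.card {o : Option β // o ≠ none} = Fintype.card β := by
  have e : {o : Option β // o ≠ none} ≃ β :=
    (Equiv.subtypeEquiv (Equiv.refl _) (fun o => by
      simp [Option.ne_none_iff_isSome])).trans (Equiv.optionIsSomeEquiv β)
  rw [Nat.card_congr e, Nat.card_eq_fintype_card]

lemma count_good (n : ℕ) :
    Nat.card {τ : Perm (Fin (k + n)) // GoodPerm k τ}
      = Nat.factorial k * ∏ i ∈ Finset.range n, (k + i) := by
  induction n with
  | zero =>
    have : ∀ τ : Perm (Fin (k + 0)), GoodPerm k τ := by
      intro τ x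
      exact ⟨0, by simpa using x.isLt⟩
    rw [Nat.card_congr (Equiv.subtypeUnivEquiv this)]
    simp [Nat.card_eq_fintype_card, Fintype.card_perm]
  | succ n ih =>
    rw [Nat.card_congr (stepEquiv k n), Nat.card_prod, card_option_ne_none, ih,
      Finset.prod_range_succ]
    simp [Fintype.card_fin]
    ring

end count

/-- The number of permutations `τ` of `{1, ..., k+n}` such that every cycle of `τ`
(including fixed points) contains at least one element of `{1, ..., k}` — equivalently,
every orbit of `τ` meets the first `k` elements — equals
`k! · ∏_{i=0}^{n-1} (k+i) = k! (k+n-1)!/(k-1)!`. -/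
theorem stmt_17 (k n : ℕ) (hk : 1 ≤ k) :
    {τ : Equiv.Perm (Fin (k + n)) | ∀ x : Fin (k + n), ∃ m : ℕ, ((τ ^ m) x : ℕ) < k}.ncard
      = Nat.factorial k * ∏ i ∈ Finset.range n, (k + i) ∧
    Nat.factorial k * ∏ i ∈ Finset.range n, (k + i)
      = Nat.factorial k * (Nat.factorial (k + n - 1) / Nat.factorial (k - 1)) := by
  constructor
  · rw [← Nat.card_coe_set_eq]
    rw [← count_good k n]
    rfl
  · congr 1
    have hprod : ∏ i ∈ Finset.range n, (k + i) = k.ascFactorial n := by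
      induction n with
      | zero => simp
      | succ n ih => rw [Finset.prod_range_succ, ih, Nat.ascFactorial_succ, mul_comm]
    rw [hprod, Nat.ascFactorial_eq_div' k n hk]
end
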